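/- arXiv:2504.01502 — 2 statements merged into one kernel-verified Lean document; each statement's English description precedes it below -/
import Mathlib

section
/- The number of Lagrangian subgroups of Z_N × Z_N with respect to the pairing ⟨(n,m),(n',m')⟩ = nm' - n'm (mod N) equals σ₁(N), the sum of divisors of N. Here a Lagrangian subgroup is a subgroup L such that every pair of elements of L pairs to 0 mod N, and any element pairing to 0 with all of L lies in L. -/
/-!
The first coordinates of a Lagrangian `L` form a subgroup `d • ZMod N` with `d * e = N`.
Maximality then forces `(0, e) ∈ L`, so `L` contains the subgroup spanned by `(d, b)` and `(0, e)`
for any `(d, b) ∈ L`; that subgroup is itself Lagrangian, hence equal to `L`. It determines `d`,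
and `b` modulo `e`, so the Lagrangians correspond to the pairs `(d * e = N, b ∈ ZMod e)`, of which
there are `∑_{d e = N} e = σ₁(N)`.
-/

/-- A Lagrangian subgroup of `ZMod N × ZMod N` for the Dirac pairing
`⟨(n,m),(n',m')⟩ = n m' - n' m`. -/
def IsLagrangian (N : ℕ) (L : AddSubgroup (ZMod N × ZMod N)) : Prop :=
  (∀ x ∈ L, ∀ y ∈ L, x.1 * y.2 - y.1 * x.2 = 0) ∧
  (∀ x : ZMod N × ZMod N, (∀ y ∈ L, x.1 * y.2 - y.1 * x.2 = 0) → x ∈ L)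

namespace ZMod

variable {N : ℕ}

theorem natCast_dvd_intCast_iff {e : ℕ} (he : e ∣ N) (k : ℤ) :
    (e : ZMod N) ∣ (k : ZMod N) ↔ (e : ℤ) ∣ k := by
  refine ⟨fun ⟨t, ht⟩ => ?_, fun h => by simpa using Int.cast_dvd_cast (α := ZMod N) _ _ h⟩
  obtain ⟨j, rfl⟩ := intCast_surjective t
  have hN : (N : ℤ) ∣ k - e * j := by
    rw [← intCast_zmod_eq_zero_iff_dvd]
    push_cast
    rw [ht, sub_self]
  exact (dvd_sub_left (dvd_mul_right _ _)).mp ((Int.natCast_dvd_natCast.mpr he).trans hN)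

theorem natCast_dvd_natCast_iff {d d' : ℕ} (hd : d ∣ N) :
    (d : ZMod N) ∣ (d' : ZMod N) ↔ d ∣ d' := by
  exact_mod_cast natCast_dvd_intCast_iff hd d'

theorem mul_natCast_eq_zero_iff {d e : ℕ} (hde : d * e = N) (he : e ≠ 0) (z : ZMod N) :
    z * e = 0 ↔ (d : ZMod N) ∣ z := by
  obtain ⟨k, rfl⟩ := intCast_surjective z
  rw [natCast_dvd_intCast_iff ⟨e, hde.symm⟩, ← Int.cast_natCast e, ← Int.cast_mul,
    intCast_zmod_eq_zero_iff_dvd, ← hde, Nat.cast_mul]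
  exact mul_dvd_mul_iff_right (by exact_mod_cast he)

theorem natCast_dvd_iff_castHom_eq_zero {e : ℕ} (he : e ∣ N) (x : ZMod N) :
    (e : ZMod N) ∣ x ↔ castHom he (ZMod e) x = 0 := by
  obtain ⟨k, rfl⟩ := intCast_surjective x
  rw [natCast_dvd_intCast_iff he, map_intCast, intCast_zmod_eq_zero_iff_dvd]

theorem exists_eq_zmultiples_natCast (A : AddSubgroup (ZMod N)) :
    ∃ d : ℕ, d ∣ N ∧ A = AddSubgroup.zmultiples (d : ZMod N) := by
  obtain ⟨a, ha⟩ := Int.subgroup_cyclic (A.comap (Int.castAddHom (ZMod N)))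
  rw [← AddSubgroup.zmultiples_eq_closure, ← Int.zmultiples_natAbs] at ha
  refine ⟨a.natAbs, ?_, ?_⟩
  · have hN : (N : ℤ) ∈ A.comap (Int.castAddHom (ZMod N)) := by simp
    rw [ha, Int.mem_zmultiples_iff] at hN
    exact_mod_cast hN
  · rw [← AddSubgroup.map_comap_eq_self_of_surjective (f := Int.castAddHom (ZMod N))
      intCast_surjective A, ha, AddMonoidHom.map_zmultiples]
    simp

end ZMod

theorem IsLagrangian.eq_of_le {N : ℕ} {M L : AddSubgroup (ZMod N × ZMod N)}
    (hM : IsLagrangian N M) (hL : IsLagrangian N L) (h : M ≤ L) : M = L :=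
  le_antisymm h fun x hx => hM.2 x fun y hy => hL.1 x hx y (h hy)

/-- The subgroup spanned by the rows of the Hermite normal form `!![d, b; 0, e]`. -/
def hermiteSubgroup {N : ℕ} (d e : ℕ) (b : ZMod N) : AddSubgroup (ZMod N × ZMod N) :=
  (Submodule.span (ZMod N) {((d : ZMod N), b), (0, (e : ZMod N))}).toAddSubgroup

section hermiteSubgroup

variable {N d e : ℕ} {b : ZMod N}

theorem mem_hermiteSubgroup {x : ZMod N × ZMod N} :
    x ∈ hermiteSubgroup d e b ↔ ∃ t s : ZMod N, x = (t * d, t * b + s * e) := by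
  simp [hermiteSubgroup, Submodule.mem_span_pair, Prod.ext_iff, eq_comm]

theorem mk_mem_hermiteSubgroup : ((d : ZMod N), b) ∈ hermiteSubgroup d e b :=
  mem_hermiteSubgroup.mpr ⟨1, 0, by simp⟩

theorem mk_zero_mem_hermiteSubgroup : ((0 : ZMod N), (e : ZMod N)) ∈ hermiteSubgroup d e b :=
  mem_hermiteSubgroup.mpr ⟨0, 1, by simp⟩

theorem hermiteSubgroup_le {L : AddSubgroup (ZMod N × ZMod N)} (hb : ((d : ZMod N), b) ∈ L)
    (he : ((0 : ZMod N), (e : ZMod N)) ∈ L) : hermiteSubgroup d e b ≤ L := by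
  show Submodule.span (ZMod N) _ ≤ AddSubgroup.toZModSubmodule N L
  simp [Submodule.span_le, Set.insert_subset_iff, hb, he]

theorem isLagrangian_hermiteSubgroup (hN : N ≠ 0) (hde : d * e = N) (b : ZMod N) :
    IsLagrangian N (hermiteSubgroup d e b) := by
  have hd : d ≠ 0 := left_ne_zero_of_mul (hde ▸ hN)
  have he : e ≠ 0 := right_ne_zero_of_mul (hde ▸ hN)
  have hde₀ : (d : ZMod N) * e = 0 := by rw [← Nat.cast_mul, hde, ZMod.natCast_self]
  refine ⟨fun x hx y hy => ?_, fun x hx => ?_⟩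
  · obtain ⟨t, s, rfl⟩ := mem_hermiteSubgroup.mp hx
    obtain ⟨t', s', rfl⟩ := mem_hermiteSubgroup.mp hy
    linear_combination (t * s' - t' * s) * hde₀
  · have h₁ := hx _ mk_mem_hermiteSubgroup
    have h₂ := hx _ mk_zero_mem_hermiteSubgroup
    obtain ⟨t, ht⟩ := (ZMod.mul_natCast_eq_zero_iff hde he x.1).mp (by simpa using h₂)
    obtain ⟨s, hs⟩ := (ZMod.mul_natCast_eq_zero_iff (mul_comm e d ▸ hde) hd (x.2 - t * b)).mp
      (by rw [ht] at h₁; linear_combination -h₁)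
    exact mem_hermiteSubgroup.mpr ⟨t, s, Prod.ext (by rw [ht]; ring) (by linear_combination hs)⟩

theorem eq_of_hermiteSubgroup_eq {d' e' : ℕ} {b' : ZMod N} (hd : d ∣ N) (hd' : d' ∣ N)
    (h : hermiteSubgroup d e b = hermiteSubgroup d' e' b') : d = d' := by
  obtain ⟨t, _, ht⟩ := mem_hermiteSubgroup.mp (h ▸ mk_mem_hermiteSubgroup :
    ((d : ZMod N), b) ∈ hermiteSubgroup d' e' b')
  obtain ⟨t', _, ht'⟩ := mem_hermiteSubgroup.mp (h ▸ mk_mem_hermiteSubgroup :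
    ((d' : ZMod N), b') ∈ hermiteSubgroup d e b)
  simp only [Prod.ext_iff] at ht ht'
  refine Nat.dvd_antisymm ((ZMod.natCast_dvd_natCast_iff hd).mp ⟨t', ?_⟩)
    ((ZMod.natCast_dvd_natCast_iff hd').mp ⟨t, ?_⟩)
  · rw [ht'.1, mul_comm]
  · rw [ht.1, mul_comm]

theorem hermiteSubgroup_eq_iff (hN : N ≠ 0) (hde : d * e = N) {b' : ZMod N} :
    hermiteSubgroup d e b = hermiteSubgroup d e b' ↔ (e : ZMod N) ∣ b - b' := by
  refine ⟨fun h => ?_, fun ⟨c, hc⟩ => ?_⟩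
  · obtain ⟨t, s, ht⟩ := mem_hermiteSubgroup.mp (h ▸ mk_mem_hermiteSubgroup :
      ((d : ZMod N), b) ∈ hermiteSubgroup d e b')
    simp only [Prod.ext_iff] at ht
    have hd : d ≠ 0 := left_ne_zero_of_mul (hde ▸ hN)
    obtain ⟨c, hc⟩ := (ZMod.mul_natCast_eq_zero_iff (mul_comm e d ▸ hde) hd (1 - t)).mp
      (by linear_combination ht.1)
    exact ⟨s - c * b', by linear_combination ht.2 - b' * hc⟩
  · refine (isLagrangian_hermiteSubgroup hN hde b).eq_of_le
      (isLagrangian_hermiteSubgroup hN hde b') (hermiteSubgroup_le ?_ mk_zero_mem_hermiteSubgroup)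
    exact mem_hermiteSubgroup.mpr ⟨1, c, Prod.ext (one_mul _).symm (by linear_combination hc)⟩

end hermiteSubgroup

theorem IsLagrangian.exists_eq_hermiteSubgroup {N : ℕ} (hN : N ≠ 0)
    {L : AddSubgroup (ZMod N × ZMod N)} (hL : IsLagrangian N L) :
    ∃ d e : ℕ, ∃ b : ZMod N, d * e = N ∧ hermiteSubgroup d e b = L := by
  obtain ⟨d, ⟨e, hde⟩, hfst⟩ :=
    ZMod.exists_eq_zmultiples_natCast (L.map (AddMonoidHom.fst (ZMod N) (ZMod N)))
  have hfst_mem : ∀ y ∈ L, ∃ k : ℤ, k * (d : ZMod N) = y.1 := fun y hy => by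
    have : y.1 ∈ L.map (AddMonoidHom.fst (ZMod N) (ZMod N)) := ⟨y, hy, rfl⟩
    simpa [hfst, AddSubgroup.mem_zmultiples_iff] using this
  obtain ⟨⟨_, b⟩, hb, rfl⟩ : (d : ZMod N) ∈ L.map (AddMonoidHom.fst (ZMod N) (ZMod N)) :=
    hfst ▸ AddSubgroup.mem_zmultiples _
  have hde₀ : (d : ZMod N) * e = 0 := by rw [← Nat.cast_mul, ← hde, ZMod.natCast_self]
  have he : ((0 : ZMod N), (e : ZMod N)) ∈ L := hL.2 _ fun y hy => by
    obtain ⟨k, hk⟩ := hfst_mem y hy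
    rw [← hk]
    linear_combination -k * hde₀
  exact ⟨d, e, b, hde.symm, (isLagrangian_hermiteSubgroup hN hde.symm b).eq_of_le hL
    (hermiteSubgroup_le hb he)⟩

def hermiteParam (N : ℕ) (p : Σ q : N.divisorsAntidiagonal, ZMod q.1.2) :
    AddSubgroup (ZMod N × ZMod N) :=
  hermiteSubgroup p.1.1.1 p.1.1.2 (p.2.val : ZMod N)

theorem hermiteParam_injective {N : ℕ} (hN : N ≠ 0) : Function.Injective (hermiteParam N) := by
  rintro ⟨⟨⟨d, e⟩, hq⟩, b⟩ ⟨⟨⟨d', e'⟩, hq'⟩, b'⟩ h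
  have hde := (Nat.mem_divisorsAntidiagonal.mp hq).1
  have hde' := (Nat.mem_divisorsAntidiagonal.mp hq').1
  obtain rfl : d = d' := eq_of_hermiteSubgroup_eq (Dvd.intro e hde) (Dvd.intro e' hde') h
  obtain rfl : e = e' := Nat.eq_of_mul_eq_mul_left
    (Nat.pos_of_ne_zero (Nat.left_ne_zero_of_mem_divisorsAntidiagonal hq)) (hde.trans hde'.symm)
  have : NeZero e := ⟨Nat.right_ne_zero_of_mem_divisorsAntidiagonal hq⟩
  have hb := (hermiteSubgroup_eq_iff hN hde).mp h
  rw [ZMod.natCast_dvd_iff_castHom_eq_zero (Dvd.intro_left d hde), map_sub, map_natCast,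
    map_natCast, ZMod.natCast_zmod_val, ZMod.natCast_zmod_val, sub_eq_zero] at hb
  change b = b' at hb
  subst hb
  rfl

theorem range_hermiteParam {N : ℕ} (hN : N ≠ 0) :
    Set.range (hermiteParam N) = {L | IsLagrangian N L} := by
  refine Set.ext fun L => ⟨?_, fun hL => ?_⟩
  · rintro ⟨⟨⟨⟨d, e⟩, hq⟩, b⟩, rfl⟩
    exact isLagrangian_hermiteSubgroup hN (Nat.mem_divisorsAntidiagonal.mp hq).1 _
  · obtain ⟨d, e, b, hde, rfl⟩ := IsLagrangian.exists_eq_hermiteSubgroup hN hL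
    have : NeZero e := ⟨right_ne_zero_of_mul (hde ▸ hN)⟩
    have he : e ∣ N := Dvd.intro_left d hde
    refine ⟨⟨⟨(d, e), Nat.mem_divisorsAntidiagonal.mpr ⟨hde, hN⟩⟩,
      ZMod.castHom he (ZMod e) b⟩, (hermiteSubgroup_eq_iff hN hde).mpr ?_⟩
    rw [ZMod.natCast_dvd_iff_castHom_eq_zero he, map_sub, map_natCast, ZMod.natCast_zmod_val,
      sub_self]

/-- The number of Lagrangian subgroups of `ZMod N × ZMod N` equals `σ₁(N)`,
the sum of the divisors of `N`. -/
theorem count_lagrangian_eq_sigma_one (N : ℕ) (hN : 0 < N) :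
    Nat.card {L : AddSubgroup (ZMod N × ZMod N) // IsLagrangian N L} =
      ∑ d ∈ N.divisors, d := by
  have (q : N.divisorsAntidiagonal) : NeZero q.1.2 :=
    ⟨Nat.right_ne_zero_of_mem_divisorsAntidiagonal q.2⟩
  calc Nat.card {L : AddSubgroup (ZMod N × ZMod N) // IsLagrangian N L}
      = Nat.card (Set.range (hermiteParam N)) := by rw [range_hermiteParam hN.ne']; rfl
    _ = Nat.card (Σ q : N.divisorsAntidiagonal, ZMod q.1.2) :=
      Nat.card_range_of_injective (hermiteParam_injective hN.ne')
    _ = ∑ q : N.divisorsAntidiagonal, q.1.2 := by rw [Nat.card_sigma]; simp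
    _ = ∑ d ∈ N.divisors, d := by
      rw [Finset.sum_coe_sort N.divisorsAntidiagonal (fun q => q.2),
        Nat.sum_divisorsAntidiagonal' (fun _ e => e)]
end

section
/- Let N be a positive integer and k a divisor of N. Then for any residue s, the quantity (N/k) · ∑_{ℓ=1}^{k} gcd(k, s + ℓ·N/k) depends only on s modulo gcd(k, N/k); i.e., the vacuum count of (SU(N)/Z_k)_s depends only on s modulo gcd(k, N/k). -/
open Finset

private lemma gcd_congr_aux {n : ℕ} {a b : ℤ} (h : (n : ℤ) ∣ b - a) :
    Int.gcd (n : ℤ) a ∣ Int.gcd (n : ℤ) b := by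
  have h1 : (Int.gcd (n : ℤ) a : ℤ) ∣ b := by
    have hb : b = a + (b - a) := by ring
    rw [hb]
    exact dvd_add (Int.gcd_dvd_right _ _) (dvd_trans (Int.gcd_dvd_left _ _) h)
  exact Int.natCast_dvd_natCast.mp (Int.dvd_coe_gcd (Int.gcd_dvd_left _ _) h1)

private lemma gcd_congr {n : ℕ} {a b : ℤ} (h : a ≡ b [ZMOD (n : ℕ)]) :
    Int.gcd (n : ℤ) a = Int.gcd (n : ℤ) b := by
  have hd : (n : ℤ) ∣ b - a := Int.ModEq.dvd h
  exact Nat.dvd_antisymm (gcd_congr_aux hd) (gcd_congr_aux (by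
    have : a - b = -(b - a) := by ring
    rw [this]; exact dvd_neg.mpr hd))

private lemma gcd_eq_val (k : ℕ) [NeZero k] (a : ℤ) :
    Int.gcd (k : ℤ) a = Nat.gcd k ((a : ZMod k)).val := by
  have h1 : (((a : ZMod k)).val : ℤ) ≡ a [ZMOD (k : ℕ)] := by
    rw [ZMod.val_intCast]
    exact Int.emod_emod_of_dvd a dvd_rfl
  rw [← gcd_congr h1, Int.gcd_natCast_natCast]

private lemma sum_eq_zmod_sum (k : ℕ) [NeZero k] (m w : ℤ) :
    ∑ ℓ ∈ Icc 1 k, Int.gcd (k : ℤ) (w + ℓ * m)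
      = ∑ x : ZMod k, Nat.gcd k (((w : ZMod k) + x * (m : ZMod k)).val) := by
  have hk : 0 < k := Nat.pos_of_ne_zero (NeZero.ne k)
  apply Finset.sum_nbij' (i := fun ℓ => ((ℓ : ℕ) : ZMod k))
    (j := fun x => if x.val = 0 then k else x.val)
  · intro ℓ _; exact Finset.mem_univ _
  · intro x _
    by_cases h : x.val = 0
    · rw [if_pos h]
      exact Finset.mem_Icc.mpr ⟨hk, le_refl k⟩
    · have hv := ZMod.val_lt x
      simp only [if_neg h, Finset.mem_Icc]
      omega
  · intro ℓ hℓ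
    simp only [Finset.mem_Icc] at hℓ
    have hval : ((ℓ : ZMod k)).val = ℓ % k := ZMod.val_natCast k ℓ
    by_cases h : ℓ = k
    · simp [h, hval, Nat.mod_self, hk]
    · have hlt : ℓ < k := by omega
      have : ℓ % k = ℓ := Nat.mod_eq_of_lt hlt
      simp only [hval, this]
      rw [if_neg (by omega)]
  · intro x _
    by_cases h : x.val = 0
    · have hx : x = 0 := by
        have := ZMod.natCast_rightInverse (n := k) x
        rw [h] at this
        simpa using this.symm
      simp [h, hx, ZMod.natCast_self]
    · simp only [if_neg h]
      exact ZMod.natCast_rightInverse x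
  · intro ℓ hℓ
    rw [gcd_eq_val]
    congr 1
    push_cast
    ring_nf

theorem sum_gcd_shift (k : ℕ) (hk : k ≠ 0) (m s s' : ℤ)
    (h : (Int.gcd (k : ℤ) m : ℤ) ∣ s' - s) :
    ∑ ℓ ∈ Icc 1 k, Int.gcd (k : ℤ) (s + ℓ * m)
      = ∑ ℓ ∈ Icc 1 k, Int.gcd (k : ℤ) (s' + ℓ * m) := by
  haveI : NeZero k := ⟨hk⟩
  obtain ⟨t, ht⟩ := h
  have hbez : (Int.gcd (k : ℤ) m : ℤ) = k * Int.gcdA k m + m * Int.gcdB k m :=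
    Int.gcd_eq_gcd_ab (k : ℤ) m
  set c : ZMod k := ((Int.gcdB k m * t : ℤ) : ZMod k) with hc
  have hσ : (s' : ZMod k) = (s : ZMod k) + c * (m : ZMod k) := by
    have hs' : s' = s + (k : ℤ) * (Int.gcdA k m * t) + (Int.gcdB k m * t) * m := by
      have : s' - s = (k * Int.gcdA k m + m * Int.gcdB k m) * t := by rw [← hbez, ht]
      linarith [this]
    rw [hs', hc]
    push_cast
    rw [ZMod.natCast_self]
    ring
  rw [sum_eq_zmod_sum k m s, sum_eq_zmod_sum k m s', hσ]
  have := Equiv.sum_comp (Equiv.addLeft c)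
    (fun x : ZMod k => Nat.gcd k (((s : ZMod k) + x * (m : ZMod k)).val))
  rw [← this]
  apply Finset.sum_congr rfl
  intro x _
  congr 1
  simp [Equiv.addLeft]
  ring_nf

/-- The vacuum count `I(N,k,s) = (N/k) ∑_{ℓ=1}^{k} gcd(k, s + ℓ N/k)` of the global
variant `(SU(N)/Z_k)_s` depends only on `s` modulo `gcd(k, N/k)`. -/
theorem vacuum_count_depends_on_s_mod_gcd (N k : ℕ) (hN : 0 < N) (hk : k ∣ N)
    (s s' : ℤ) (hss : s ≡ s' [ZMOD (Nat.gcd k (N / k))]) :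
    (N / k) * ∑ ℓ ∈ Finset.Icc 1 k, Int.gcd (k : ℤ) (s + ℓ * ((N / k : ℕ) : ℤ)) =
    (N / k) * ∑ ℓ ∈ Finset.Icc 1 k, Int.gcd (k : ℤ) (s' + ℓ * ((N / k : ℕ) : ℤ)) := by
  have hk0 : k ≠ 0 := by
    rintro rfl
    simp at hk
    omega
  congr 1
  apply sum_gcd_shift k hk0
  have hdvd : ((Nat.gcd k (N / k) : ℕ) : ℤ) ∣ s' - s := Int.ModEq.dvd hss
  have hgcd : Int.gcd (k : ℤ) ((N / k : ℕ) : ℤ) = Nat.gcd k (N / k) :=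
    Int.gcd_natCast_natCast k (N / k)
  rw [hgcd]
  exact hdvd
end
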